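/- arXiv:2310.04545 — 9 statements merged into one kernel-verified Lean document; each statement's English description precedes it below -/
import Mathlib

section
/- For every x ∈ (0,∞) and t > 0, the function y ↦ Ψ^x(t,y) is differentiable on (0,∞) with derivative ∂_y Ψ^x(t,y) = −q_t(y,x); equivalently, for all y ∈ (0,∞), y · ∂_y Ψ^x(t,y) = −(1/a) p_t(θ(x,y,t)). -/
open MeasureTheory Real Set

/-- Gaussian heat kernel `p_t(z) = (2πt)^{-1/2} exp(-z²/(2t))`. -/
noncomputable def heatK (t z : ℝ) : ℝ :=
  (Real.sqrt (2 * Real.pi * t))⁻¹ * Real.exp (-(z ^ 2) / (2 * t))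

/-- `q_t(x,y) = (1/(ax)) p_t(log x /a - log y /a + at/2)`. -/
noncomputable def qker (a t x y : ℝ) : ℝ :=
  (a * x)⁻¹ * heatK t (Real.log x / a - Real.log y / a + a * t / 2)

/-- `q̂_t(x,y) = (1/(ax)) p_t(log x /a - log y /a - at/2)`. -/
noncomputable def qhat (a t x y : ℝ) : ℝ :=
  (a * x)⁻¹ * heatK t (Real.log x / a - Real.log y / a - a * t / 2)

/-- `θ(x,y,t) = log x /a - log y /a - at/2`. -/
noncomputable def theta (a x y t : ℝ) : ℝ :=
  Real.log x / a - Real.log y / a - a * t / 2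

/-- `Ψ^x(t,y) = ∫_0^x q̂_t(z,y) dz`. -/
noncomputable def Psi (a x t y : ℝ) : ℝ := ∫ z in Set.Ioc (0:ℝ) x, qhat a t z y

/-- standard normal cdf `Φ(ξ) = ∫_{-∞}^ξ p_1(z) dz`. -/
noncomputable def Phi (ξ : ℝ) : ℝ := ∫ z in Set.Iic ξ, heatK 1 z

/-! The substitution `z = exp (a w + log y + a²t/2)` turns `Ψ^x(t,y)` into the Gaussian
distribution function `∫_{-∞}^{θ(x,y,t)} p_t`, in which `y` enters only through the upper
limit. The fundamental theorem of calculus and the chain rule then give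
`p_t(θ) · ∂_y θ = -p_t(θ)/(a y)`, and `q_t(y,x) = p_t(-θ)/(a y) = p_t(θ)/(a y)` because `p_t`
is even. -/

section

variable {E : Type*} [NormedAddCommGroup E] [NormedSpace ℝ E]

theorem integral_comp_exp_mul_add_Iic {a : ℝ} (ha : 0 < a) (c s : ℝ) (g : ℝ → E) :
    ∫ w in Iic s, (a * exp (a * w + c)) • g (exp (a * w + c)) =
      ∫ z in Ioc 0 (exp (a * s + c)), g z := by
  have himage : (fun w => exp (a * w + c)) '' Iic s = Ioc 0 (exp (a * s + c)) := by
    change (exp ∘ (· + c) ∘ (a * ·)) '' Iic s = _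
    simp only [image_comp, image_mul_left_Iic ha, image_add_const_Iic, image_exp_Iic]
  have hderiv : ∀ w ∈ Iic s,
      HasDerivWithinAt (fun w => exp (a * w + c)) (a * exp (a * w + c)) (Iic s) w := by
    intro w _
    simpa [mul_comm] using (((hasDerivAt_id w).const_mul a).add_const c).exp.hasDerivWithinAt
  have hinj : InjOn (fun w => exp (a * w + c)) (Iic s) := fun u _ v _ h => by
    simpa [ha.ne'] using exp_injective h
  rw [← himage, integral_image_eq_integral_abs_deriv_smul measurableSet_Iic hderiv hinj]
  simp_rw [abs_of_pos (mul_pos ha (exp_pos _))]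

theorem hasDerivAt_integral_Iic [CompleteSpace E] {f : ℝ → E} (hf : Integrable f) {ξ : ℝ}
    (hc : ContinuousAt f ξ) : HasDerivAt (fun u => ∫ z in Iic u, f z) (f ξ) ξ := by
  have hsplit : ∀ u, ∫ z in Iic u, f z = (∫ z in Iic 0, f z) + ∫ z in (0 : ℝ)..u, f z :=
    fun u => by
      rw [← intervalIntegral.integral_Iic_sub_Iic hf.integrableOn hf.integrableOn]; abel
  rw [funext hsplit]
  exact (intervalIntegral.integral_hasDerivAt_right hf.intervalIntegrable
    hf.aestronglyMeasurable.stronglyMeasurableAtFilter hc).const_add _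

end

lemma heatK_neg (t z : ℝ) : heatK t (-z) = heatK t z := by simp [heatK]

lemma continuous_heatK (t : ℝ) : Continuous (heatK t) := by
  unfold heatK; fun_prop

lemma integrable_heatK {t : ℝ} (ht : 0 < t) : Integrable (heatK t) := by
  have h : heatK t = fun z => (√(2 * π * t))⁻¹ * exp (-(2 * t)⁻¹ * z ^ 2) := by
    ext z; unfold heatK; ring_nf
  rw [h]
  exact (integrable_exp_neg_mul_sq (by positivity)).const_mul _

lemma qker_eq_heatK_theta (a t x y : ℝ) :
    qker a t y x = (a * y)⁻¹ * heatK t (theta a x y t) := by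
  rw [qker, theta, ← heatK_neg]; ring_nf

lemma Psi_eq_integral_Iic_heatK {a x : ℝ} (ha : 0 < a) (hx : 0 < x) (t y : ℝ) :
    Psi a x t y = ∫ w in Iic (theta a x y t), heatK t w := by
  set c := log y + a ^ 2 * t / 2
  have hx' : exp (a * theta a x y t + c) = x := by
    rw [show a * theta a x y t + c = log x by simp only [theta, c]; field_simp; ring, exp_log hx]
  have hsubst := integral_comp_exp_mul_add_Iic ha c (theta a x y t) (fun z => qhat a t z y)
  rw [hx'] at hsubst
  rw [Psi, ← hsubst]
  congr 1 with w
  have harg : log (exp (a * w + c)) / a - log y / a - a * t / 2 = w := by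
    rw [log_exp]; simp only [c]; field_simp; ring
  rw [smul_eq_mul, qhat, harg, mul_inv_cancel_left₀ (by positivity)]

lemma hasDerivAt_theta {a : ℝ} (ha : 0 < a) (x t : ℝ) {y : ℝ} (hy : 0 < y) :
    HasDerivAt (fun y' => theta a x y' t) (-(a * y)⁻¹) y := by
  have := (((hasDerivAt_log hy.ne').div_const a).const_sub (log x / a)).sub_const (a * t / 2)
  exact this.congr_deriv (by field_simp)

theorem Psi_deriv_space (a : ℝ) (ha : 0 < a) (x t : ℝ) (hx : 0 < x) (ht : 0 < t)
    (y : ℝ) (hy : 0 < y) :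
    HasDerivAt (fun y' => Psi a x t y') (-(qker a t y x)) y ∧
    y * (-(qker a t y x)) = -(a⁻¹ * heatK t (theta a x y t)) := by
  rw [qker_eq_heatK_theta]
  constructor
  · simp_rw [Psi_eq_integral_Iic_heatK ha hx t]
    refine ((hasDerivAt_integral_Iic (integrable_heatK ht) (continuous_heatK t).continuousAt).comp
      y (hasDerivAt_theta ha x t hy)).congr_deriv ?_
    ring
  · field_simp
end

section
/- For every x ∈ (0,∞), the function (t,y) ↦ q_t(x,y) on (0,∞) × (0,∞) satisfies the partial differential equation ∂_t q_t(x,y) = (a² y²/2) ∂²_{yy} q_t(x,y); that is, for each fixed (t,y) ∈ (0,∞) × (0,∞), the derivative of s ↦ q_s(x,y) at s = t exists and equals (a² y²/2) times the second derivative of the function y' ↦ q_t(x,y') at y' = y. -/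
open MeasureTheory Real Set

/-! In the variable `v = log y` the operator `(a²y²/2) ∂_yy` becomes `(a²/2)(∂_vv - ∂_v)`, and
`q_t(x, e^v)` is the heat kernel `p_t` at a point moving with slope `-1/a` in `v` and drift `a/2`
in `t`. The drift is absorbed by the Cameron–Martin identity `p_s(z + bs) = e^{-bz - b²s/2} p_s(z)`,
after which both sides reduce to the heat equation `∂_t p = ½ ∂_zz p`. -/

lemma hasDerivAt_heatK (t z : ℝ) : HasDerivAt (heatK t) (-(z / t) * heatK t z) z := by
  have hexp : HasDerivAt (fun z : ℝ => -(z ^ 2) / (2 * t)) (-(z / t)) z :=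
    ((hasDerivAt_pow 2 z).neg.div_const (2 * t)).congr_deriv (by norm_num; ring)
  exact (hexp.exp.const_mul (√(2 * π * t))⁻¹).congr_deriv (by rw [heatK]; ring)

lemma hasDerivAt_neg_div_mul_heatK (t z : ℝ) :
    HasDerivAt (fun z => -(z / t) * heatK t z) (((z / t) ^ 2 - 1 / t) * heatK t z) z :=
  (((hasDerivAt_id z).div_const t).neg.mul (hasDerivAt_heatK t z)).congr_deriv
    (by simp only [id, Pi.neg_apply]; ring)

lemma hasDerivAt_heatK_time {t : ℝ} (ht : 0 < t) (z : ℝ) :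
    HasDerivAt (fun s => heatK s z) (((z / t) ^ 2 - 1 / t) / 2 * heatK t z) t := by
  have hS : 0 < √(2 * π * t) := by positivity
  have hsqrt : HasDerivAt (fun s => √(2 * π * s)) (π / √(2 * π * t)) t :=
    (((hasDerivAt_id t).const_mul (2 * π)).sqrt (by positivity)).congr_deriv
      (by simp only [id]; field_simp)
  have hexp : HasDerivAt (fun s => -(z ^ 2) / (2 * s)) (z ^ 2 / (2 * t ^ 2)) t := by
    have := (((hasDerivAt_id t).const_mul 2).inv (by positivity)).const_mul (-(z ^ 2))
    simp only [id] at this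
    exact this.congr_deriv (by field_simp)
  refine ((hsqrt.inv hS.ne').mul hexp.exp).congr_deriv ?_
  simp only [heatK, Pi.inv_apply]
  rw [Real.sq_sqrt (by positivity)]
  field_simp
  ring

lemma heatK_add_mul {s : ℝ} (hs : s ≠ 0) (z b : ℝ) :
    heatK s (z + b * s) = exp (-(b * z) - b ^ 2 * s / 2) * heatK s z := by
  simp only [heatK]
  rw [mul_left_comm, ← Real.exp_add]
  congr 2
  field_simp
  ring

lemma hasDerivAt_heatK_drift {t : ℝ} (ht : 0 < t) (z b : ℝ) :
    HasDerivAt (fun s => heatK s (z + b * s))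
      (((((z + b * t) / t) ^ 2 - 1 / t) / 2 - b * ((z + b * t) / t)) * heatK t (z + b * t)) t := by
  have hshift : (fun s => exp (-(b * z) - b ^ 2 * s / 2) * heatK s z) =ᶠ[nhds t]
      fun s => heatK s (z + b * s) := by
    filter_upwards [isOpen_Ioi.mem_nhds ht] with s hs
    exact (heatK_add_mul (ne_of_gt hs) z b).symm
  have hfac : HasDerivAt (fun s => exp (-(b * z) - b ^ 2 * s / 2))
      (exp (-(b * z) - b ^ 2 * t / 2) * -(b ^ 2 / 2)) t :=
    ((((hasDerivAt_id t).const_mul (b ^ 2)).div_const 2).const_sub (-(b * z))).exp.congr_deriv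
      (by simp only [id]; ring)
  refine ((hfac.mul (hasDerivAt_heatK_time ht z)).congr_of_eventuallyEq hshift.symm).congr_deriv ?_
  rw [heatK_add_mul ht.ne' z b]
  field_simp
  ring

lemma sq_mul_iteratedDeriv_two_comp_log {g g' g'' : ℝ → ℝ}
    (hg : ∀ v, HasDerivAt g (g' v) v) (hg' : ∀ v, HasDerivAt g' (g'' v) v) {y : ℝ} (hy : 0 < y) :
    y ^ 2 * iteratedDeriv 2 (fun y => g (log y)) y = g'' (log y) - g' (log y) := by
  have hderiv : deriv (fun y => g (log y)) =ᶠ[nhds y] fun y => g' (log y) * y⁻¹ := by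
    filter_upwards [isOpen_Ioi.mem_nhds hy] with y' hy'
    exact ((hg _).comp y' (hasDerivAt_log (ne_of_gt hy'))).deriv
  have hsecond : HasDerivAt (fun y => g' (log y) * y⁻¹)
      (g'' (log y) * y⁻¹ * y⁻¹ + g' (log y) * -(y ^ 2)⁻¹) y :=
    ((hg' _).comp y (hasDerivAt_log hy.ne')).mul (hasDerivAt_inv hy.ne')
  rw [iteratedDeriv_succ, iteratedDeriv_one, hderiv.deriv_eq, hsecond.deriv]
  field_simp
  ring

theorem qker_solves_gbm_pde_general (a : ℝ) (ha : 0 < a) (x : ℝ)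
    (t y : ℝ) (ht : 0 < t) (hy : 0 < y) :
    HasDerivAt (fun s => qker a s x y)
      ((a ^ 2 * y ^ 2 / 2) * iteratedDeriv 2 (fun y' => qker a t x y') y) t := by
  have hinner : ∀ v, HasDerivAt (fun v => log x / a - v / a + a * t / 2) (-(1 / a)) v := fun v =>
    (((hasDerivAt_id v).div_const a).const_sub _).add_const _
  have hspace := sq_mul_iteratedDeriv_two_comp_log
    (g := fun v => (a * x)⁻¹ * heatK t (log x / a - v / a + a * t / 2))
    (fun v => ((hasDerivAt_heatK t _).comp v (hinner v)).const_mul (a * x)⁻¹)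
    (fun v => (((hasDerivAt_neg_div_mul_heatK t _).comp v (hinner v)).mul_const _).const_mul _) hy
  have hD2 : iteratedDeriv 2 (fun y' => qker a t x y') y = _ / y ^ 2 :=
    eq_div_of_mul_eq (by positivity) ((mul_comm _ _).trans hspace)
  have hdrift : (fun s => qker a s x y) =
      fun s => (a * x)⁻¹ * heatK s (log x / a - log y / a + a / 2 * s) := by
    simp only [qker, mul_div_right_comm a _ 2]
  rw [hdrift, hD2, mul_div_right_comm a t 2]
  refine ((hasDerivAt_heatK_drift ht _ (a / 2)).const_mul (a * x)⁻¹).congr_deriv ?_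
  field_simp

theorem qker_solves_gbm_pde (a : ℝ) (ha : 0 < a) (x : ℝ) (hx : 0 < x)
    (t y : ℝ) (ht : 0 < t) (hy : 0 < y) :
    HasDerivAt (fun s => qker a s x y)
      ((a ^ 2 * y ^ 2 / 2) * iteratedDeriv 2 (fun y' => qker a t x y') y) t :=
  qker_solves_gbm_pde_general a ha x t y ht hy
end

section
/- For every T ∈ (0,∞), every 0 < ℓ < L < ∞, and every q ∈ [1,∞), there exists a constant C ∈ (0,∞) (depending only on a, q, ℓ, L, T) such that for all t ∈ (0,T] and all x ∈ [ℓ,L]: ∫_0^∞ ( a^{-1} p_t(θ(x,y,t)) )^q dy ≤ C t^{-(q-1)/2}. -/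
/-!
After the substitution `y = exp u`, the kernel `a⁻¹ p_t(θ(x, y, t)) dy` becomes `exp u` times the
density of `N(log x - a²t/2, a²t)`, so by the Gaussian moment generating function it has total mass
`x ≤ L`. It is bounded by `(a √(2πt))⁻¹`, hence its `q`-th power is at most `(a √(2πt))^(1-q)` times
itself, and `(a √(2πt))^(1-q) = (a √(2π))^(1-q) t^(-(q-1)/2)`.
-/

open MeasureTheory Real Set

open ProbabilityTheory
open scoped NNReal

lemma heatK_nonneg (t z : ℝ) : 0 ≤ heatK t z := by
  unfold heatK; positivity

lemma heatK_le_inv_sqrt {t : ℝ} (ht : 0 ≤ t) (z : ℝ) : heatK t z ≤ (√(2 * π * t))⁻¹ := by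
  refine mul_le_of_le_one_right (by positivity) (exp_le_one_iff.mpr ?_)
  exact div_nonpos_of_nonpos_of_nonneg (neg_nonpos.mpr (sq_nonneg z)) (by positivity)

lemma inv_mul_heatK_theta_exp {a t : ℝ} (ha : 0 < a) (ht : 0 ≤ t) (x u : ℝ) :
    a⁻¹ * heatK t (theta a x (exp u) t)
      = gaussianPDFReal (log x - a ^ 2 * t / 2) (a ^ 2 * t).toNNReal u := by
  rw [gaussianPDFReal, Real.coe_toNNReal _ (by positivity), theta, log_exp, heatK,
    show 2 * π * (a ^ 2 * t) = a ^ 2 * (2 * π * t) by ring, sqrt_mul (sq_nonneg a),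
    sqrt_sq ha.le, mul_inv, ← mul_assoc]
  congr 2
  field_simp
  ring

lemma integral_Ioi_zero_eq_integral_exp_smul_comp_exp {E : Type*} [NormedAddCommGroup E]
    [NormedSpace ℝ E] (f : ℝ → E) :
    ∫ y in Ioi (0 : ℝ), f y = ∫ u, exp u • f (exp u) := by
  rw [← range_exp, ← image_univ, integral_image_eq_integral_abs_deriv_smul MeasurableSet.univ
    (fun u _ => (hasDerivAt_exp u).hasDerivWithinAt) exp_injective.injOn, Measure.restrict_univ]
  simp_rw [abs_of_pos (exp_pos _)]

lemma integral_exp_mul_gaussianPDFReal (μ : ℝ) {v : ℝ≥0} (hv : v ≠ 0) :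
    ∫ u, exp u * gaussianPDFReal μ v u = exp (μ + v / 2) := by
  have hmgf := congrFun (mgf_id_gaussianReal (μ := μ) (v := v)) 1
  rw [mgf, integral_gaussianReal_eq_integral_smul hv] at hmgf
  simpa [mul_comm] using hmgf

lemma integral_inv_mul_heatK_theta {a t x : ℝ} (ha : 0 < a) (ht : 0 < t) (hx : 0 < x) :
    ∫ y in Ioi (0 : ℝ), a⁻¹ * heatK t (theta a x y t) = x := by
  have hv : (a ^ 2 * t).toNNReal ≠ 0 := by
    rw [Ne, Real.toNNReal_eq_zero, not_le]; positivity
  simp_rw [integral_Ioi_zero_eq_integral_exp_smul_comp_exp, smul_eq_mul,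
    inv_mul_heatK_theta_exp ha ht.le, integral_exp_mul_gaussianPDFReal _ hv,
    Real.coe_toNNReal _ (by positivity : 0 ≤ a ^ 2 * t)]
  rw [sub_add_cancel, exp_log hx]

lemma rpow_le_rpow_sub_one_mul {u M q : ℝ} (hu : 0 ≤ u) (huM : u ≤ M) (hq : 1 ≤ q) :
    u ^ q ≤ M ^ (q - 1) * u :=
  calc u ^ q = u ^ (q - 1) * u := by
        rw [← rpow_add_one' hu (by linarith), sub_add_cancel]
    _ ≤ M ^ (q - 1) * u := by gcongr

lemma integral_rpow_le_rpow_sub_one_mul_integral {α : Type*} [MeasurableSpace α] {μ : Measure α}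
    {f : α → ℝ} {M q : ℝ} (hf : Integrable f μ) (hf0 : ∀ x, 0 ≤ f x) (hfM : ∀ x, f x ≤ M)
    (hq : 1 ≤ q) :
    ∫ x, f x ^ q ∂μ ≤ M ^ (q - 1) * ∫ x, f x ∂μ := by
  rw [← integral_const_mul]
  exact integral_mono_of_nonneg (.of_forall fun x => rpow_nonneg (hf0 x) q) (hf.const_mul _)
    (.of_forall fun x => rpow_le_rpow_sub_one_mul (hf0 x) (hfM x) hq)

lemma inv_mul_sqrt_rpow {c t : ℝ} (hc : 0 ≤ c) (ht : 0 ≤ t) (p : ℝ) :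
    (c * √t)⁻¹ ^ p = c⁻¹ ^ p * t ^ (-p / 2) := by
  rw [mul_inv, mul_rpow (by positivity) (by positivity), inv_rpow (sqrt_nonneg t),
    ← rpow_neg (sqrt_nonneg t), sqrt_eq_rpow, ← rpow_mul ht]
  ring_nf

theorem lq_bound_ydPsi_general (a : ℝ) (ha : 0 < a)
    (T ℓ L q : ℝ) (hℓ : 0 < ℓ) (hℓL : ℓ < L) (hq : 1 ≤ q) :
    ∃ C : ℝ, 0 < C ∧ ∀ t ∈ Set.Ioc (0:ℝ) T, ∀ x ∈ Set.Icc ℓ L,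
      (∫ y in Set.Ioi (0:ℝ), (a⁻¹ * heatK t (theta a x y t)) ^ q)
        ≤ C * t ^ (-(q - 1) / 2) := by
  refine ⟨L * (a * √(2 * π))⁻¹ ^ (q - 1), mul_pos (hℓ.trans hℓL) (by positivity), ?_⟩
  rintro t ⟨ht, -⟩ x ⟨hℓx, hxL⟩
  have hx : 0 < x := hℓ.trans_le hℓx
  have hsup : ∀ y, a⁻¹ * heatK t (theta a x y t) ≤ (a * √(2 * π * t))⁻¹ := fun y => by
    rw [mul_inv]; gcongr; exact heatK_le_inv_sqrt ht.le _
  have hint : IntegrableOn (fun y => a⁻¹ * heatK t (theta a x y t)) (Ioi 0) :=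
    .of_integral_ne_zero (by rw [integral_inv_mul_heatK_theta ha ht hx]; exact hx.ne')
  calc ∫ y in Ioi 0, (a⁻¹ * heatK t (theta a x y t)) ^ q
      ≤ (a * √(2 * π * t))⁻¹ ^ (q - 1) * ∫ y in Ioi 0, a⁻¹ * heatK t (theta a x y t) :=
        integral_rpow_le_rpow_sub_one_mul_integral hint
          (fun y => mul_nonneg (by positivity) (heatK_nonneg _ _)) hsup hq
    _ = (a * √(2 * π * t))⁻¹ ^ (q - 1) * x := by rw [integral_inv_mul_heatK_theta ha ht hx]
    _ ≤ (a * √(2 * π * t))⁻¹ ^ (q - 1) * L := by gcongr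
    _ = L * (a * √(2 * π))⁻¹ ^ (q - 1) * t ^ (-(q - 1) / 2) := by
        rw [sqrt_mul (by positivity), ← mul_assoc, inv_mul_sqrt_rpow (by positivity) ht.le]
        ring

theorem lq_bound_ydPsi (a : ℝ) (ha : 0 < a)
    (T ℓ L q : ℝ) (hT : 0 < T) (hℓ : 0 < ℓ) (hℓL : ℓ < L) (hq : 1 ≤ q) :
    ∃ C : ℝ, 0 < C ∧ ∀ t ∈ Set.Ioc (0:ℝ) T, ∀ x ∈ Set.Icc ℓ L,
      (∫ y in Set.Ioi (0:ℝ), (a⁻¹ * heatK t (theta a x y t)) ^ q)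
        ≤ C * t ^ (-(q - 1) / 2) :=
  lq_bound_ydPsi_general a ha T ℓ L q hℓ hℓL hq
end

section
/- For every T ∈ (0,∞), every 0 < ℓ < L < ∞, and every q ∈ [1,∞), there exists a constant C ∈ (0,∞) (depending only on a, q, ℓ, L, T) such that for all t ∈ (0,T] and all x ∈ [ℓ,L]: ∫_0^∞ | ( a/2 + θ(x,y,t)/t ) p_t(θ(x,y,t)) |^q dy ≤ C t^{-q + 1/2}. -/
open MeasureTheory Real Set

/-!
Since `|z| e^{-z²/(4t)} ≤ √t` and `p_t(z) ≤ e^{-z²/(2t)} / √t`, the integrand is at most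
`((a√t/2 + 1)/t)^q e^{-q θ²/(4t)}`. The substitution `y = e^u` turns the integral of
`e^{-q θ²/(4t)}` into a Gaussian integral, which is `O(√t)` uniformly for `x ∈ [ℓ, L]`, `t ≤ T`.
-/

section

variable {E : Type*} [NormedAddCommGroup E] [NormedSpace ℝ E]

theorem integral_Ioi_zero_comp_log (g : ℝ → E) :
    ∫ y in Ioi 0, g (log y) = ∫ u, exp u • g u := by
  rw [← range_exp, ← image_univ, integral_image_eq_integral_abs_deriv_smul MeasurableSet.univ
    (fun u _ ↦ (hasDerivAt_exp u).hasDerivWithinAt) exp_injective.injOn, setIntegral_univ]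
  simp [abs_of_pos (exp_pos _)]

theorem integrableOn_Ioi_zero_comp_log_iff (g : ℝ → E) :
    IntegrableOn (fun y ↦ g (log y)) (Ioi 0) ↔ Integrable (fun u ↦ exp u • g u) := by
  rw [← range_exp, ← image_univ, integrableOn_image_iff_integrableOn_abs_deriv_smul
    MeasurableSet.univ (fun u _ ↦ (hasDerivAt_exp u).hasDerivWithinAt) exp_injective.injOn,
    integrableOn_univ]
  simp [abs_of_pos (exp_pos _)]

end

theorem exp_mul_exp_neg_mul_sq_sub {b : ℝ} (hb : 0 < b) (m u : ℝ) :
    exp u * exp (-b * (u - m) ^ 2)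
      = exp (m + 1 / (4 * b)) * exp (-b * (u - (m + 1 / (2 * b))) ^ 2) := by
  rw [← exp_add, ← exp_add]
  congr 1
  field_simp
  ring

theorem integrable_exp_mul_exp_neg_mul_sq_sub {b : ℝ} (hb : 0 < b) (m : ℝ) :
    Integrable (fun u ↦ exp u * exp (-b * (u - m) ^ 2)) := by
  simp_rw [exp_mul_exp_neg_mul_sq_sub hb]
  exact ((integrable_exp_neg_mul_sq hb).comp_sub_right _).const_mul _

theorem integral_exp_mul_exp_neg_mul_sq_sub {b : ℝ} (hb : 0 < b) (m : ℝ) :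
    ∫ u, exp u * exp (-b * (u - m) ^ 2) = exp (m + 1 / (4 * b)) * √(π / b) := by
  simp_rw [exp_mul_exp_neg_mul_sq_sub hb, integral_const_mul]
  rw [integral_sub_right_eq_self (fun u ↦ exp (-b * u ^ 2)), integral_gaussian]

theorem integrableOn_exp_neg_mul_sq_log_sub {b : ℝ} (hb : 0 < b) (m : ℝ) :
    IntegrableOn (fun y ↦ exp (-b * (log y - m) ^ 2)) (Ioi 0) :=
  (integrableOn_Ioi_zero_comp_log_iff (fun u ↦ exp (-b * (u - m) ^ 2))).2
    (integrable_exp_mul_exp_neg_mul_sq_sub hb m)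

theorem integral_exp_neg_mul_sq_log_sub {b : ℝ} (hb : 0 < b) (m : ℝ) :
    ∫ y in Ioi 0, exp (-b * (log y - m) ^ 2) = exp (m + 1 / (4 * b)) * √(π / b) := by
  rw [integral_Ioi_zero_comp_log (fun u ↦ exp (-b * (u - m) ^ 2))]
  exact integral_exp_mul_exp_neg_mul_sq_sub hb m

theorem heatK_le {t : ℝ} (ht : 0 < t) (z : ℝ) :
    heatK t z ≤ exp (-z ^ 2 / (4 * t)) ^ 2 / √t := by
  have h2π : √t ≤ √(2 * π * t) := sqrt_le_sqrt (by nlinarith [pi_gt_three])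
  rw [heatK, ← exp_nat_mul, inv_mul_eq_div]
  gcongr
  exact le_of_eq (by push_cast; ring)

theorem abs_mul_exp_neg_sq_div_le {t : ℝ} (ht : 0 < t) (z : ℝ) :
    |z| * exp (-z ^ 2 / (4 * t)) ≤ √t := by
  -- AM-GM gives `|z| ≤ √t (1 + z²/(4t))`, and `(1 + x) e^{-x} ≤ 1`.
  have hamgm : |z| ≤ √t * (1 + z ^ 2 / (4 * t)) := by
    obtain ⟨s, hs, rfl⟩ : ∃ s, 0 < s ∧ t = s ^ 2 :=
      ⟨√t, sqrt_pos.2 ht, (sq_sqrt ht.le).symm⟩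
    rw [sqrt_sq hs.le]
    field_simp
    nlinarith [sq_nonneg (|z| - 2 * s), sq_abs z]
  have hexp : (1 + z ^ 2 / (4 * t)) * exp (-(z ^ 2 / (4 * t))) ≤ 1 := by
    rw [exp_neg, ← div_eq_mul_inv, div_le_one (exp_pos _), add_comm]
    exact add_one_le_exp _
  calc |z| * exp (-z ^ 2 / (4 * t))
      ≤ √t * (1 + z ^ 2 / (4 * t)) * exp (-(z ^ 2 / (4 * t))) := by
        rw [neg_div]; gcongr
    _ ≤ √t := by rw [mul_assoc]; exact mul_le_of_le_one_right (sqrt_nonneg t) hexp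

theorem abs_mul_heatK_le {t : ℝ} (ht : 0 < t) (b z : ℝ) :
    |(b + z / t) * heatK t z| ≤ (|b| * √t + 1) / t * exp (-z ^ 2 / (4 * t)) := by
  set E := exp (-z ^ 2 / (4 * t))
  have hs : 0 < √t := sqrt_pos.2 ht
  have hE : E ≤ 1 := exp_le_one_iff.2 (by rw [neg_div]; exact neg_nonpos.2 (by positivity))
  have hheat : 0 ≤ heatK t z := by rw [heatK]; positivity
  calc |(b + z / t) * heatK t z|
      ≤ (|b| + |z| / t) * (E ^ 2 / √t) := by
        rw [abs_mul, abs_of_nonneg hheat]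
        gcongr
        · exact (abs_add_le _ _).trans_eq (by rw [abs_div, abs_of_pos ht])
        · exact heatK_le ht z
    _ = |b| * E * E / √t + |z| * E * E / (t * √t) := by ring
    _ ≤ |b| * E * 1 / √t + √t * E / (t * √t) := by
        gcongr
        exact abs_mul_exp_neg_sq_div_le ht z
    _ = (|b| * √t + 1) / t * E := by
        field_simp
        linear_combination E * |b| * (mul_self_sqrt ht.le).symm

theorem theta_sq (a x y t : ℝ) (ha : a ≠ 0) :
    theta a x y t ^ 2 = (log y - (log x - a ^ 2 * t / 2)) ^ 2 / a ^ 2 := by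
  rw [theta]
  field_simp
  ring

theorem integral_abs_mul_heatK_theta_rpow_le {a q t x : ℝ} (ha : 0 < a) (hq : 1 ≤ q)
    (ht : 0 < t) (hx : 0 < x) :
    ∫ y in Ioi 0, |(a / 2 + theta a x y t / t) * heatK t (theta a x y t)| ^ q
      ≤ ((a * √t / 2 + 1) / t) ^ q * (x * exp (a ^ 2 * t) * (2 * a * √π * √t)) := by
  set m := log x - a ^ 2 * t / 2 with hm
  set b := q / (4 * t * a ^ 2)
  have hq0 : 0 < q := by linarith
  have hb : 0 < b := by positivity
  have hpoint : ∀ y, |(a / 2 + theta a x y t / t) * heatK t (theta a x y t)| ^ q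
      ≤ ((a * √t / 2 + 1) / t) ^ q * exp (-b * (log y - m) ^ 2) := by
    intro y
    have h := abs_mul_heatK_le ht (a / 2) (theta a x y t)
    rw [abs_of_pos (half_pos ha), div_mul_eq_mul_div a 2 √t] at h
    calc _ ≤ ((a * √t / 2 + 1) / t * exp (-theta a x y t ^ 2 / (4 * t))) ^ q := by gcongr
      _ = _ := by
        rw [mul_rpow (by positivity) (exp_pos _).le, ← exp_mul, theta_sq a x y t ha.ne']
        congr 2
        simp only [b, m]
        field_simp
  have hvar : 1 / (4 * b) = a ^ 2 * t / q := by simp only [b]; field_simp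
  have hvar_le : a ^ 2 * t / q ≤ a ^ 2 * t := div_le_self (by positivity) hq
  calc _ ≤ ∫ y in Ioi 0, ((a * √t / 2 + 1) / t) ^ q * exp (-b * (log y - m) ^ 2) :=
        integral_mono_of_nonneg (.of_forall fun y ↦ by positivity)
          ((integrableOn_exp_neg_mul_sq_log_sub hb m).const_mul _) (.of_forall hpoint)
    _ = ((a * √t / 2 + 1) / t) ^ q * (exp (m + 1 / (4 * b)) * √(π / b)) := by
        rw [integral_const_mul, integral_exp_neg_mul_sq_log_sub hb m]
    _ ≤ _ := by
        gcongr
        · rw [← exp_log hx, ← exp_add, exp_le_exp, hvar]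
          linarith [mul_nonneg (sq_nonneg a) ht.le]
        · rw [sqrt_le_iff, show π / b = 4 * π * (1 / (4 * b)) by ring, hvar]
          refine ⟨by positivity, ?_⟩
          rw [mul_pow, mul_pow, mul_pow, sq_sqrt pi_pos.le, sq_sqrt ht.le]
          nlinarith [pi_pos]

theorem lq_bound_dtPsi_general (a : ℝ) (ha : 0 < a)
    (T ℓ L q : ℝ) (hℓ : 0 < ℓ) (hℓL : ℓ < L) (hq : 1 ≤ q) :
    ∃ C : ℝ, 0 < C ∧ ∀ t ∈ Set.Ioc (0:ℝ) T, ∀ x ∈ Set.Icc ℓ L,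
      (∫ y in Set.Ioi (0:ℝ),
          |(a / 2 + theta a x y t / t) * heatK t (theta a x y t)| ^ q)
        ≤ C * t ^ (-q + 1 / 2) := by
  have hL : 0 < L := hℓ.trans hℓL
  refine ⟨(a * √T / 2 + 1) ^ q * (L * exp (a ^ 2 * T) * (2 * a * √π)), by positivity, ?_⟩
  rintro t ⟨ht, htT⟩ x ⟨hℓx, hxL⟩
  have hx : 0 < x := hℓ.trans_le hℓx
  calc _ ≤ ((a * √t / 2 + 1) / t) ^ q * (x * exp (a ^ 2 * t) * (2 * a * √π * √t)) :=
        integral_abs_mul_heatK_theta_rpow_le ha hq ht hx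
    _ ≤ ((a * √T / 2 + 1) / t) ^ q * (L * exp (a ^ 2 * T) * (2 * a * √π * √t)) := by
        gcongr
    _ = _ := by
        rw [div_rpow (by positivity) ht.le, rpow_add ht, rpow_neg ht.le, ← sqrt_eq_rpow]
        field_simp

theorem lq_bound_dtPsi (a : ℝ) (ha : 0 < a)
    (T ℓ L q : ℝ) (hT : 0 < T) (hℓ : 0 < ℓ) (hℓL : ℓ < L) (hq : 1 ≤ q) :
    ∃ C : ℝ, 0 < C ∧ ∀ t ∈ Set.Ioc (0:ℝ) T, ∀ x ∈ Set.Icc ℓ L,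
      (∫ y in Set.Ioi (0:ℝ),
          |(a / 2 + theta a x y t / t) * heatK t (theta a x y t)| ^ q)
        ≤ C * t ^ (-q + 1 / 2) :=
  lq_bound_dtPsi_general a ha T ℓ L q hℓ hℓL hq
end

section
/- For every T ∈ (0,∞), every 0 < ℓ < L < ∞, and every q ∈ [1,∞), there exists a constant C ∈ (0,∞) (depending only on a, q, ℓ, L, T) such that for all t ∈ (0,T] and all x ∈ [ℓ,L]: ∫_0^∞ | ( 1/(2at) − θ(x,y,t)/(2t) − θ(x,y,t)²/(2at²) ) p_t(θ(x,y,t)) |^q dy ≤ C t^{-(3q-1)/2}. -/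
open MeasureTheory Real Set

/-!
Substitute `y = x exp (-a √t v - a² t / 2)`, so that `θ(x,y,t) = √t v` and `dy = a √t y dv`.
Then `|(⋯) p_t(θ)| ≤ C t^{-3/2} e^{|v| - v²/2}`, while `y ≤ L e^{a √T |v|}`; so after the
substitution the integrand is at most `√t · t^{-3q/2}` times the `t`-independent integrable
function `e^{(q + a √T)|v| - q v²/2}`.
-/

theorem integrable_exp_mul_abs_sub_mul_sq (c : ℝ) {β : ℝ} (hβ : 0 < β) :
    Integrable fun v : ℝ => exp (c * |v| - β * v ^ 2) := by
  refine ((integrable_exp_neg_mul_sq (half_pos hβ)).const_mul (exp (c ^ 2 / (2 * β)))).mono'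
    (by fun_prop) (Filter.Eventually.of_forall fun v => ?_)
  have hcv : c * |v| ≤ c ^ 2 / (2 * β) + β / 2 * v ^ 2 := by
    rw [div_add' _ _ _ (by positivity), le_div_iff₀ (by positivity), ← sq_abs v]
    nlinarith [sq_nonneg (c - β * |v|)]
  rw [Real.norm_of_nonneg (exp_pos _).le, ← exp_add, exp_le_exp]
  linarith

theorem integral_Ioi_eq_integral_comp_exp_affine {E : Type*} [NormedAddCommGroup E]
    [NormedSpace ℝ E] (g : ℝ → E) {α : ℝ} (hα : α ≠ 0) (β : ℝ) :
    ∫ y in Ioi 0, g y = ∫ v, (|α| * exp (α * v + β)) • g (exp (α * v + β)) := by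
  have haffine : Function.Surjective fun v : ℝ => α * v + β :=
    fun w => ⟨(w - β) / α, by field_simp; ring⟩
  have himage : (fun v => exp (α * v + β)) '' univ = Ioi 0 := by
    rw [image_univ, ← Real.range_exp]
    exact haffine.range_comp exp
  have hderiv (v : ℝ) : HasDerivAt (fun v => exp (α * v + β)) (exp (α * v + β) * α) v :=
    (((hasDerivAt_id v).const_mul α).add_const β).exp.congr_deriv (by simp)
  have hinj : InjOn (fun v => exp (α * v + β)) univ := fun v _ w _ h => by
    simpa [hα] using Real.exp_injective h
  rw [← himage, integral_image_eq_integral_abs_deriv_smul MeasurableSet.univ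
    (fun v _ => (hderiv v).hasDerivWithinAt) hinj, Measure.restrict_univ]
  simp_rw [abs_mul, abs_of_pos (exp_pos _), mul_comm]

/-- The closed form of `y ∂_t ∂_y Ψ^x(t,y)`. -/
noncomputable def ydtdyPsi (a x t y : ℝ) : ℝ :=
  (1 / (2 * a * t) - theta a x y t / (2 * t) - (theta a x y t) ^ 2 / (2 * a * t ^ 2))
    * heatK t (theta a x y t)

theorem theta_exp_affine {a : ℝ} (ha : a ≠ 0) (x t s v : ℝ) :
    theta a x (exp (-(a * s) * v + (log x - a ^ 2 * t / 2))) t = s * v := by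
  rw [theta, log_exp]
  field_simp
  ring

theorem heatK_sqrt_mul {t : ℝ} (ht : 0 < t) (v : ℝ) :
    heatK t (√t * v) = exp (-v ^ 2 / 2) / (√(2 * π) * √t) := by
  rw [heatK, inv_mul_eq_div, mul_pow, sq_sqrt ht.le, sqrt_mul (by positivity)]
  congr 2
  field_simp

theorem one_add_sq_le_two_mul_exp_abs (v : ℝ) : 1 + v ^ 2 ≤ 2 * exp |v| := by
  nlinarith [quadratic_le_exp_of_nonneg (abs_nonneg v), sq_abs v, abs_nonneg v]

theorem abs_bracket_le_mul_exp_abs {a s S : ℝ} (ha : 0 < a) (hs : 0 ≤ s) (hsS : s ≤ S)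
    (v : ℝ) : |1 / (2 * a) - s * v / 2 - v ^ 2 / (2 * a)| ≤ (1 / a + S) * exp |v| := by
  have hv : |v| ≤ 1 + v ^ 2 := by nlinarith [sq_abs v, sq_nonneg (|v| - 1)]
  have hsv : |s * v| ≤ S * (1 + v ^ 2) := by
    rw [abs_mul, abs_of_nonneg hs]
    exact mul_le_mul hsS hv (abs_nonneg v) (hs.trans hsS)
  have ha' : 0 ≤ 1 / (2 * a) := by positivity
  have hva : 0 ≤ v ^ 2 / (2 * a) := by positivity
  calc |1 / (2 * a) - s * v / 2 - v ^ 2 / (2 * a)|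
      ≤ 1 / (2 * a) + v ^ 2 / (2 * a) + S * (1 + v ^ 2) / 2 := by
        rw [abs_le]
        constructor <;> linarith [abs_le.1 hsv]
    _ = (1 / a + S) * ((1 + v ^ 2) / 2) := by field_simp
    _ ≤ (1 / a + S) * exp |v| := by
        have : 0 ≤ S := hs.trans hsS
        gcongr
        linarith [one_add_sq_le_two_mul_exp_abs v]

theorem abs_ydtdyPsi_exp_affine_le {a t T : ℝ} (ha : 0 < a) (ht : 0 < t) (htT : t ≤ T)
    (x v : ℝ) :
    |ydtdyPsi a x t (exp (-(a * √t) * v + (log x - a ^ 2 * t / 2)))|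
      ≤ (1 / a + √T) / √(2 * π) * exp (|v| - v ^ 2 / 2) * t ^ (-(3 / 2 : ℝ)) := by
  have hbracket : 1 / (2 * a * t) - √t * v / (2 * t) - (√t * v) ^ 2 / (2 * a * t ^ 2)
      = (1 / (2 * a) - √t * v / 2 - v ^ 2 / (2 * a)) / t := by
    rw [mul_pow, sq_sqrt ht.le]
    field_simp
  have hpow : t ^ (-(3 / 2 : ℝ)) = (t * √t)⁻¹ := by
    rw [sqrt_eq_rpow, ← rpow_one_add' ht.le (by norm_num), rpow_neg ht.le]
    norm_num
  rw [ydtdyPsi, theta_exp_affine ha.ne', hbracket, heatK_sqrt_mul ht, hpow, abs_mul, abs_div,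
    abs_of_pos ht, abs_of_pos (by positivity : 0 < exp (-v ^ 2 / 2) / (√(2 * π) * √t))]
  calc |1 / (2 * a) - √t * v / 2 - v ^ 2 / (2 * a)| / t
        * (exp (-v ^ 2 / 2) / (√(2 * π) * √t))
      ≤ (1 / a + √T) * exp |v| / t * (exp (-v ^ 2 / 2) / (√(2 * π) * √t)) := by
        gcongr
        exact abs_bracket_le_mul_exp_abs ha (sqrt_nonneg t) (sqrt_le_sqrt htT) v
    _ = _ := by rw [sub_eq_add_neg, exp_add, neg_div]; field_simp

theorem exp_affine_le {a t T x L : ℝ} (ha : 0 ≤ a) (ht : 0 ≤ t) (htT : t ≤ T) (hx : 0 < x)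
    (hxL : x ≤ L) (v : ℝ) :
    exp (-(a * √t) * v + (log x - a ^ 2 * t / 2)) ≤ L * exp (a * √T * |v|) := by
  have hv : -(a * √t) * v ≤ a * √T * |v| :=
    calc -(a * √t) * v = a * √t * (-v) := by ring
      _ ≤ a * √t * |v| := by gcongr; exact neg_le_abs v
      _ ≤ a * √T * |v| := by gcongr
  calc exp (-(a * √t) * v + (log x - a ^ 2 * t / 2)) ≤ exp (log x + a * √T * |v|) := by
        have : 0 ≤ a ^ 2 * t / 2 := by positivity
        exact exp_le_exp.2 (by linarith)
    _ = x * exp (a * √T * |v|) := by rw [exp_add, exp_log hx]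
    _ ≤ L * exp (a * √T * |v|) := by gcongr

theorem jacobian_mul_abs_ydtdyPsi_rpow_le {a t T x L q : ℝ} (ha : 0 < a) (hq : 0 ≤ q)
    (ht : 0 < t) (htT : t ≤ T) (hx : 0 < x) (hxL : x ≤ L) (v : ℝ) :
    (|-(a * √t)| * exp (-(a * √t) * v + (log x - a ^ 2 * t / 2))) •
        |ydtdyPsi a x t (exp (-(a * √t) * v + (log x - a ^ 2 * t / 2)))| ^ q
      ≤ t ^ (-(3 * q - 1) / 2) * (a * L * ((1 / a + √T) / √(2 * π)) ^ q
        * exp ((q + a * √T) * |v| - q / 2 * v ^ 2)) := by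
  set y := exp (-(a * √t) * v + (log x - a ^ 2 * t / 2))
  set K := (1 / a + √T) / √(2 * π)
  have hkernel : |ydtdyPsi a x t y| ^ q
      ≤ K ^ q * exp ((|v| - v ^ 2 / 2) * q) * t ^ (-(3 / 2) * q) := by
    refine (rpow_le_rpow (abs_nonneg _) (abs_ydtdyPsi_exp_affine_le ha ht htT x v) hq).trans_eq ?_
    rw [mul_rpow (by positivity) (by positivity), mul_rpow (by positivity) (by positivity),
      ← exp_mul, ← rpow_mul ht.le]
  have htpow : √t * t ^ (-(3 / 2) * q) = t ^ (-(3 * q - 1) / 2) := by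
    rw [sqrt_eq_rpow, ← rpow_add ht]
    ring_nf
  rw [smul_eq_mul, abs_neg, abs_of_pos (by positivity)]
  calc a * √t * y * |ydtdyPsi a x t y| ^ q
      ≤ a * √t * (L * exp (a * √T * |v|))
        * (K ^ q * exp ((|v| - v ^ 2 / 2) * q) * t ^ (-(3 / 2) * q)) :=
        mul_le_mul (mul_le_mul_of_nonneg_left (exp_affine_le ha.le ht.le htT hx hxL v)
          (by positivity)) hkernel (by positivity) (by positivity [hx.trans_le hxL])
    _ = √t * t ^ (-(3 / 2) * q) * (a * L * K ^ q
          * exp (a * √T * |v| + (|v| - v ^ 2 / 2) * q)) := by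
        rw [exp_add]; ring
    _ = _ := by
        rw [htpow, show a * √T * |v| + (|v| - v ^ 2 / 2) * q
          = (q + a * √T) * |v| - q / 2 * v ^ 2 by ring]

theorem lq_bound_ydtdyPsi_general (a : ℝ) (ha : 0 < a)
    (T ℓ L q : ℝ) (hℓ : 0 < ℓ) (hℓL : ℓ < L) (hq : 1 ≤ q) :
    ∃ C : ℝ, 0 < C ∧ ∀ t ∈ Set.Ioc (0:ℝ) T, ∀ x ∈ Set.Icc ℓ L,
      (∫ y in Set.Ioi (0:ℝ),
          |(1 / (2 * a * t) - theta a x y t / (2 * t)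
              - (theta a x y t) ^ 2 / (2 * a * t ^ 2)) * heatK t (theta a x y t)| ^ q)
        ≤ C * t ^ (-(3 * q - 1) / 2) := by
  set K := (1 / a + √T) / √(2 * π)
  set c := q + a * √T
  have hI := integrable_exp_mul_abs_sub_mul_sq c (by positivity : 0 < q / 2)
  have hL : 0 < L := hℓ.trans hℓL
  refine ⟨a * L * K ^ q * ∫ v, exp (c * |v| - q / 2 * v ^ 2),
    by have := integral_exp_pos hI; positivity, ?_⟩
  rintro t ⟨ht, htT⟩ x ⟨hℓx, hxL⟩
  change ∫ y in Ioi 0, |ydtdyPsi a x t y| ^ q ≤ _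
  rw [integral_Ioi_eq_integral_comp_exp_affine _ (α := -(a * √t)) (neg_ne_zero.2 (by positivity))
    (log x - a ^ 2 * t / 2)]
  have hbound := jacobian_mul_abs_ydtdyPsi_rpow_le (q := q) ha (by linarith) ht htT
    (hℓ.trans_le hℓx) hxL
  refine (integral_mono_of_nonneg (ae_of_all _ fun v => by positivity)
    ((hI.const_mul _).const_mul _) (ae_of_all _ hbound)).trans_eq ?_
  rw [integral_const_mul, integral_const_mul, mul_comm]

theorem lq_bound_ydtdyPsi (a : ℝ) (ha : 0 < a)
    (T ℓ L q : ℝ) (hT : 0 < T) (hℓ : 0 < ℓ) (hℓL : ℓ < L) (hq : 1 ≤ q) :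
    ∃ C : ℝ, 0 < C ∧ ∀ t ∈ Set.Ioc (0:ℝ) T, ∀ x ∈ Set.Icc ℓ L,
      (∫ y in Set.Ioi (0:ℝ),
          |(1 / (2 * a * t) - theta a x y t / (2 * t)
              - (theta a x y t) ^ 2 / (2 * a * t ^ 2)) * heatK t (theta a x y t)| ^ q)
        ≤ C * t ^ (-(3 * q - 1) / 2) :=
  lq_bound_ydtdyPsi_general a ha T ℓ L q hℓ hℓL hq
end

section
/- For every T ∈ (0,∞) and every m > 1, there exists a constant C ∈ (0,∞), depending only on a, T and m, such that for all y ∈ (0,∞) and all t ∈ (0,T]: ∫_0^∞ ( x q_t(x,y) )^m dx ≤ C y t^{-(m-1)/2}. -/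
open MeasureTheory Real Set

/-! The substitution `x = y * exp (a * v - a ^ 2 * t / 2)` turns `x * q_t(x, y)` into
`p_t(v) / a` and `dx` into `a * x dv`, so the moment is a Gaussian integral with a linear tilt and
can be computed exactly by completing the square. The tilt contributes the factor
`exp (-(a ^ 2 * t / 2) * (1 - 1 / m))`, which is at most `1` because `m ≥ 1`. -/

theorem integral_Ioi_zero_eq_integral_exp_smul {E : Type*} [NormedAddCommGroup E]
    [NormedSpace ℝ E] (g : ℝ → E) :
    ∫ x in Ioi (0 : ℝ), g x = ∫ u, exp u • g (exp u) := by
  rw [← range_exp, ← image_univ, integral_image_eq_integral_abs_deriv_smul MeasurableSet.univ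
    (fun u _ ↦ (hasDerivAt_exp u).hasDerivWithinAt) (fun u _ v _ huv ↦ exp_injective huv),
    setIntegral_univ]
  simp only [abs_of_pos (exp_pos _)]

theorem integral_comp_mul_add {E : Type*} [NormedAddCommGroup E] [NormedSpace ℝ E]
    (g : ℝ → E) (c d : ℝ) :
    ∫ x, g (c * x + d) = |c⁻¹| • ∫ x, g x := by
  rw [Measure.integral_comp_mul_left (fun x ↦ g (x + d)), integral_add_right_eq_self]

theorem integral_exp_neg_mul_sq_add_mul {b : ℝ} (hb : 0 < b) (c : ℝ) :
    ∫ x, exp (-b * x ^ 2 + c * x) = √(π / b) * exp (c ^ 2 / (4 * b)) := by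
  have hsq : ∀ x, -b * x ^ 2 + c * x = -b * (x - c / (2 * b)) ^ 2 + c ^ 2 / (4 * b) := by
    intro x; field_simp; ring
  simp_rw [hsq, exp_add, integral_mul_const]
  rw [integral_sub_right_eq_self (fun x ↦ exp (-b * x ^ 2)), integral_gaussian]

theorem heatK_rpow {t : ℝ} (ht : 0 < t) (z m : ℝ) :
    heatK t z ^ m = (2 * π * t) ^ (-m / 2) * exp (-(m / (2 * t)) * z ^ 2) := by
  have h2πt : 0 < 2 * π * t := by positivity
  rw [heatK, mul_rpow (by positivity) (exp_pos _).le, ← exp_mul, inv_rpow (sqrt_nonneg _),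
    sqrt_eq_rpow, ← rpow_mul h2πt.le, ← rpow_neg h2πt.le]
  congr 2 <;> ring

theorem integral_exp_mul_mul_heatK_rpow {t m : ℝ} (ht : 0 < t) (hm : 0 < m) (c : ℝ) :
    ∫ z, exp (c * z) * heatK t z ^ m
      = (2 * π * t) ^ (-(m - 1) / 2) / √m * exp (c ^ 2 * t / (2 * m)) := by
  have h2πt : 0 < 2 * π * t := by positivity
  simp_rw [heatK_rpow ht, mul_left_comm (exp _), ← exp_add, add_comm (c * _)]
  rw [integral_const_mul, integral_exp_neg_mul_sq_add_mul (by positivity),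
    show π / (m / (2 * t)) = 2 * π * t / m by field_simp, sqrt_div h2πt.le, sqrt_eq_rpow,
    show c ^ 2 / (4 * (m / (2 * t))) = c ^ 2 * t / (2 * m) by field_simp; ring]
  rw [show -(m - 1) / 2 = -m / 2 + 1 / 2 by ring, rpow_add h2πt]
  ring

theorem mul_qker_exp {a : ℝ} (ha : 0 < a) (t y v : ℝ) :
    exp (a * v + log y - a ^ 2 * t / 2) * qker a t (exp (a * v + log y - a ^ 2 * t / 2)) y
      = a⁻¹ * heatK t v := by
  rw [qker, log_exp, show (a * v + log y - a ^ 2 * t / 2) / a - log y / a + a * t / 2 = v by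
    field_simp; ring]
  field_simp

theorem integral_mul_qker_rpow {a t m y : ℝ} (ha : 0 < a) (ht : 0 < t) (hm : 0 < m)
    (hy : 0 < y) :
    ∫ x in Ioi (0 : ℝ), (x * qker a t x y) ^ m
      = a ^ (1 - m) * (2 * π * t) ^ (-(m - 1) / 2) / √m * y
          * exp (-(a ^ 2 * t / 2) * (1 - 1 / m)) := by
  set F : ℝ → ℝ := fun u ↦ exp u * (exp u * qker a t (exp u) y) ^ m
  have hF : ∀ v, F (a * v + (log y - a ^ 2 * t / 2))
      = y * exp (-(a ^ 2 * t / 2)) * a ^ (-m) * (exp (a * v) * heatK t v ^ m) := by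
    intro v
    simp only [F, ← add_sub_assoc, mul_qker_exp ha]
    rw [mul_rpow (inv_nonneg.2 ha.le) ?_, inv_rpow ha.le, ← rpow_neg ha.le, sub_eq_add_neg,
      exp_add, exp_add, exp_log hy]
    · ring
    · rw [heatK]; positivity
  have hsub := integral_comp_mul_add F a (log y - a ^ 2 * t / 2)
  simp only [hF, integral_const_mul, integral_exp_mul_mul_heatK_rpow ht hm,
    abs_of_pos (inv_pos.2 ha), smul_eq_mul] at hsub
  have hexp : exp (-(a ^ 2 * t / 2) * (1 - 1 / m))
      = exp (-(a ^ 2 * t / 2)) * exp (a ^ 2 * t / (2 * m)) := by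
    rw [← exp_add]; congr 1; field_simp; ring
  rw [integral_Ioi_zero_eq_integral_exp_smul]
  change ∫ u, F u = _
  rw [← mul_inv_cancel_left₀ ha.ne' (∫ u, F u), ← hsub,
    hexp, rpow_sub ha, rpow_one, rpow_neg ha.le]
  ring

theorem xqker_moment_bound_general (a : ℝ) (ha : 0 < a) (T m : ℝ) (hm : 1 < m) :
    ∃ C : ℝ, 0 < C ∧ ∀ y ∈ Set.Ioi (0:ℝ), ∀ t ∈ Set.Ioc (0:ℝ) T,
      (∫ x in Set.Ioi (0:ℝ), (x * qker a t x y) ^ m) ≤ C * y * t ^ (-(m - 1) / 2) := by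
  refine ⟨a ^ (1 - m) * (2 * π) ^ (-(m - 1) / 2) / √m, by positivity, ?_⟩
  rintro y (hy : 0 < y) t ⟨ht, -⟩
  have hdecay : exp (-(a ^ 2 * t / 2) * (1 - 1 / m)) ≤ 1 := by
    have hinv : 1 / m ≤ 1 := (div_le_one (by linarith)).2 hm.le
    exact exp_le_one_iff.2 (mul_nonpos_of_nonpos_of_nonneg (neg_nonpos.2 (by positivity))
      (sub_nonneg.2 hinv))
  rw [integral_mul_qker_rpow ha ht (by linarith) hy, mul_rpow (by positivity) ht.le]
  calc _ = a ^ (1 - m) * (2 * π) ^ (-(m - 1) / 2) / √m * y * t ^ (-(m - 1) / 2)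
        * exp (-(a ^ 2 * t / 2) * (1 - 1 / m)) := by ring
    _ ≤ _ := mul_le_of_le_one_right (by positivity) hdecay

theorem xqker_moment_bound (a : ℝ) (ha : 0 < a) (T m : ℝ) (hT : 0 < T) (hm : 1 < m) :
    ∃ C : ℝ, 0 < C ∧ ∀ y ∈ Set.Ioi (0:ℝ), ∀ t ∈ Set.Ioc (0:ℝ) T,
      (∫ x in Set.Ioi (0:ℝ), (x * qker a t x y) ^ m) ≤ C * y * t ^ (-(m - 1) / 2) :=
  xqker_moment_bound_general a ha T m hm
end

section
/- Let γ ≥ 0, a > 0, and m ∈ ℝ with m > 2a + 1, and let j ∈ ℕ satisfy j·a > m − 2γ. For integers i ≥ j define B_{i,j} = ∏_{k=j+1}^{i} (2γ + ka)/(2γ + ka + m), with B_{j,j} = 1. Then for all i ≥ j, B_{i,j} ≤ ( (2γ + a(i+1))/(2γ + a(j+1)) )^{-m/(2a)}, and moreover ∑_{i=j}^∞ B_{i,j} ≤ 2(2γ + a + 1)(j + 1). -/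
open MeasureTheory Real Set

/-! Bernoulli's inequality for the negative exponent `-m/(2a)` gives
`((x + a) / x) ^ (-m/(2a)) ≥ 1 - m/(2x) ≥ x / (x + m)` as soon as `x ≥ m`, so the factors of
`B_{i,j}` are dominated by ratios that telescope to `((2γ + a(i+1)) / (2γ + a(j+1))) ^ (-m/(2a))`.
As `p = m/(2a) > 1`, the tangent-line bound for the convex function `x ^ (1 - p)` compares the
series of these ratios with a telescoping sum, bounding it by `1 + 2D/(m - 2a)` where
`D = 2γ + a(j+1)`; finally `m - 2a > 1`. -/

open Finset

theorem one_add_mul_sub_one_le_rpow_of_nonpos {r q : ℝ} (hr : 0 < r) (hq : q ≤ 0) :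
    1 + q * (r - 1) ≤ r ^ q := by
  rw [rpow_def_of_pos hr]
  have hlog : q * (r - 1) ≤ q * log r := mul_le_mul_of_nonpos_left (log_le_sub_one_of_pos hr) hq
  linarith [add_one_le_exp (log r * q), mul_comm (log r) q]

theorem div_add_le_rpow_div {a m x : ℝ} (ha : 0 < a) (hm : 0 < m) (hx : m ≤ x) :
    x / (x + m) ≤ ((x + a) / x) ^ (-(m / (2 * a))) := by
  have hx0 : 0 < x := hm.trans_le hx
  have hbern := one_add_mul_sub_one_le_rpow_of_nonpos (r := (x + a) / x) (by positivity)
    (neg_nonpos.mpr (by positivity : 0 ≤ m / (2 * a)))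
  have hlin : 1 + -(m / (2 * a)) * ((x + a) / x - 1) = 1 - m / (2 * x) := by
    field_simp
    ring
  have hfrac : x / (x + m) ≤ 1 - m / (2 * x) := by
    rw [div_le_iff₀ (by linarith)]
    field_simp
    nlinarith
  linarith

theorem mul_rpow_neg_le_rpow_sub_rpow {u t p : ℝ} (hu : 0 < u) (ht : 0 ≤ t) (hp : 1 < p) :
    (p - 1) * t * (u + t) ^ (-p) ≤ u ^ (1 - p) - (u + t) ^ (1 - p) := by
  set v := u + t
  have hv : 0 < v := by positivity
  have hbern := one_add_mul_sub_one_le_rpow_of_nonpos (r := u / v) (by positivity)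
    (by linarith : 1 - p ≤ 0)
  have hv_split : v ^ (1 - p) = v * v ^ (-p) := by
    rw [mul_comm, ← rpow_add_one hv.ne']
    ring_nf
  have hu_split : u ^ (1 - p) = (u / v) ^ (1 - p) * (v * v ^ (-p)) := by
    rw [div_rpow hu.le hv.le, ← hv_split, div_mul_cancel₀ _ (by positivity)]
  have hlin : 1 + (1 - p) * (u / v - 1) = 1 + (p - 1) * t / v := by
    field_simp
    ring
  rw [hu_split, hv_split]
  have hpos : 0 ≤ v * v ^ (-p) := by positivity
  have key := mul_le_mul_of_nonneg_right (hlin ▸ hbern) hpos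
  have hexp : (1 + (p - 1) * t / v) * (v * v ^ (-p)) = v * v ^ (-p) + (p - 1) * t * v ^ (-p) := by
    field_simp
  linarith

theorem prod_Icc_le_div_of_le_div {f b : ℕ → ℝ} {j : ℕ} (hb : ∀ k, j ≤ k → 0 < b k)
    (hf₀ : ∀ k, j < k → 0 ≤ f k) (hf : ∀ k, j ≤ k → f (k + 1) ≤ b (k + 1) / b k)
    {i : ℕ} (hij : j ≤ i) : ∏ k ∈ Icc (j + 1) i, f k ≤ b i / b j := by
  induction i, hij using Nat.le_induction with
  | base => simp [(hb j le_rfl).ne']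
  | succ i hji ih =>
    rw [prod_Icc_succ_top (by omega)]
    calc (∏ k ∈ Icc (j + 1) i, f k) * f (i + 1)
        ≤ b i / b j * (b (i + 1) / b i) :=
          mul_le_mul ih (hf i hji) (hf₀ _ (by omega)) (div_nonneg (hb i hji).le (hb j le_rfl).le)
      _ = b (i + 1) / b j := by
          field_simp [(hb i hji).ne', (hb j le_rfl).ne']

theorem prod_Icc_div_add_le_rpow {c a m : ℝ} (ha : 0 < a) (hm : 0 < m) {j i : ℕ}
    (hj : m ≤ c + a * (j + 1)) (hij : j ≤ i) :
    ∏ k ∈ Icc (j + 1) i, (c + k * a) / (c + k * a + m)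
      ≤ ((c + a * (i + 1)) / (c + a * (j + 1))) ^ (-(m / (2 * a))) := by
  have hmx : ∀ k : ℕ, j ≤ k → m ≤ c + a * (k + 1) := fun k hk => by
    have : (j : ℝ) ≤ k := by exact_mod_cast hk
    nlinarith
  have hpos : ∀ k : ℕ, j ≤ k → 0 < c + a * (k + 1) := fun k hk => hm.trans_le (hmx k hk)
  rw [div_rpow (hpos i hij).le (hpos j le_rfl).le]
  refine prod_Icc_le_div_of_le_div (fun k hk => rpow_pos_of_pos (hpos k hk) _) (fun k hk => ?_)
    (fun k hk => ?_) hij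
  · obtain ⟨k, rfl⟩ : ∃ l, k = l + 1 := ⟨k - 1, by omega⟩
    have := hmx k (by omega)
    push_cast
    apply div_nonneg <;> linarith
  · rw [← div_rpow (hpos _ (by omega)).le (hpos k hk).le]
    convert div_add_le_rpow_div ha hm (hmx k hk) using 3 <;> push_cast <;> ring

theorem sum_range_one_add_mul_rpow_neg_le {s p : ℝ} (hs : 0 < s) (hp : 1 < p) (n : ℕ) :
    ∑ i ∈ range n, (1 + s * i) ^ (-p) ≤ 1 + 1 / (s * (p - 1)) := by
  cases n with
  | zero => rw [range_zero, sum_empty]; positivity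
  | succ n =>
    have hstep : ∀ i : ℕ, (1 + s * (i + 1 : ℕ)) ^ (-p)
        ≤ ((1 + s * i) ^ (1 - p) - (1 + s * (i + 1 : ℕ)) ^ (1 - p)) / (s * (p - 1)) := by
      intro i
      have h := mul_rpow_neg_le_rpow_sub_rpow (u := 1 + s * i) (by positivity) hs.le hp
      have hcast : 1 + s * ((i + 1 : ℕ) : ℝ) = 1 + s * i + s := by push_cast; ring
      rw [hcast, le_div_iff₀ (by nlinarith)]
      linarith
    have htel := sum_range_sub' (fun i : ℕ => (1 + s * i) ^ (1 - p)) n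
    have htail : 0 ≤ (1 + s * n) ^ (1 - p) := by positivity
    rw [sum_range_succ']
    calc ∑ i ∈ range n, (1 + s * (i + 1 : ℕ)) ^ (-p) + (1 + s * (0 : ℕ)) ^ (-p)
        ≤ ∑ i ∈ range n, ((1 + s * i) ^ (1 - p) - (1 + s * (i + 1 : ℕ)) ^ (1 - p)) / (s * (p - 1))
          + 1 := by
          gcongr with i
          · exact hstep i
          · simp
      _ = (1 - (1 + s * n) ^ (1 - p)) / (s * (p - 1)) + 1 := by
          rw [← sum_div, htel]
          simp
      _ ≤ 1 + 1 / (s * (p - 1)) := by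
          have : 0 < s * (p - 1) := by nlinarith
          rw [add_comm]
          gcongr
          linarith

theorem gap_product_bounds (γ a m : ℝ) (hγ : 0 ≤ γ) (ha : 0 < a)
    (hm : 2 * a + 1 < m) (j : ℕ) (hj : m - 2 * γ < (j : ℝ) * a) :
    (∀ i : ℕ, j ≤ i →
      (∏ k ∈ Finset.Icc (j + 1) i, (2 * γ + (k : ℝ) * a) / (2 * γ + (k : ℝ) * a + m))
        ≤ ((2 * γ + a * ((i : ℝ) + 1)) / (2 * γ + a * ((j : ℝ) + 1))) ^ (-(m / (2 * a)))) ∧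
    (∑' i : ℕ,
        ∏ k ∈ Finset.Icc (j + 1) (j + i), (2 * γ + (k : ℝ) * a) / (2 * γ + (k : ℝ) * a + m))
      ≤ 2 * (2 * γ + a + 1) * ((j : ℝ) + 1) := by
  have hm0 : 0 < m := by linarith
  have hmD : m ≤ 2 * γ + a * ((j : ℝ) + 1) := by linarith
  have hD : 0 < 2 * γ + a * ((j : ℝ) + 1) := hm0.trans_le hmD
  have hprod_le := fun i (hij : j ≤ i) => prod_Icc_div_add_le_rpow ha hm0 hmD hij
  refine ⟨hprod_le, ?_⟩
  set D := 2 * γ + a * ((j : ℝ) + 1)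
  have hp : 1 < m / (2 * a) := by rw [lt_div_iff₀ (by positivity)]; linarith
  have hterm : ∀ i : ℕ, ∏ k ∈ Icc (j + 1) (j + i), (2 * γ + (k : ℝ) * a) / (2 * γ + k * a + m)
      ≤ (1 + a / D * i) ^ (-(m / (2 * a))) := fun i => by
    convert hprod_le (j + i) (by omega) using 2
    field_simp
    push_cast
    ring
  have hnonneg : ∀ i : ℕ, 0 ≤ ∏ k ∈ Icc (j + 1) (j + i),
      (2 * γ + (k : ℝ) * a) / (2 * γ + k * a + m) := fun i =>
    prod_nonneg fun k hk => by
      have : (j : ℝ) + 1 ≤ k := by exact_mod_cast (mem_Icc.mp hk).1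
      apply div_nonneg <;> nlinarith
  have hbound : 1 + 1 / (a / D * (m / (2 * a) - 1)) ≤ 2 * (2 * γ + a + 1) * ((j : ℝ) + 1) := by
    have hrate : 1 / (a / D * (m / (2 * a) - 1)) = 2 * D / (m - 2 * a) := by
      field_simp
    have : 2 * D / (m - 2 * a) ≤ 2 * D := div_le_self (by positivity) (by linarith)
    nlinarith [mul_nonneg hγ (Nat.cast_nonneg j : (0 : ℝ) ≤ j)]
  exact (Real.tsum_le_of_sum_range_le hnonneg fun n =>
    (sum_le_sum fun i _ => hterm i).trans
      (sum_range_one_add_mul_rpow_neg_le (div_pos ha hD) hp n)).trans hbound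
end

section
/- There exists a constant C₀ ∈ (0,∞), depending only on a, such that for all x, y ∈ (0,∞) and all ε ∈ (0,1): | Ψ^x(ε,y) − 𝟙_{(0,x]}(y) | ≤ C₀ ( Ψ^{x e^{a√ε}}(ε,y) − Ψ^{x e^{-a√ε}}(ε,y) ), where 𝟙_{(0,x]} denotes the indicator function of the interval (0,x]. -/
/-!
The substitution `z = exp (a √ε u + log y + a² ε / 2)` turns `Ψ^x(ε, y)` into the standard normal
cdf `Φ(ξ)` at `ξ = θ(x, y, ε) / √ε`; multiplying `x` by `e^{± a √ε}` shifts `ξ` by `± 1`, and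
`y ≤ x` iff `ξ ≥ -a √ε / 2`. So it suffices to bound `|Φ ξ - 1_{ξ ≥ η}|` by
`C (Φ (ξ + 1) - Φ (ξ - 1))` uniformly in thresholds `η ∈ [-b, b]`, and by `Φ (-ξ) = 1 - Φ ξ` this
reduces to `c (1 - Φ ξ) ≤ Φ (ξ + 1) - Φ ξ` for `ξ ≥ -b`.
For `ξ ≥ 0` this holds because the Gaussian density at `z + 1` is at most `e^{-1/2}` times the
density at `z`, so the tail beyond `ξ + 1` is a fixed fraction of the tail beyond `ξ`; for
`ξ ∈ [-b, 0]` the increment over `(ξ, ξ + 1]` is at least the density at `b + 1`.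
-/

open MeasureTheory Real Set

open ProbabilityTheory

lemma setIntegral_Ioi_comp_add_right {E : Type*} [NormedAddCommGroup E] [NormedSpace ℝ E]
    (f : ℝ → E) (c d : ℝ) : ∫ x in Ioi c, f (x + d) = ∫ x in Ioi (c + d), f x := by
  rw [← integral_indicator measurableSet_Ioi, ← integral_indicator measurableSet_Ioi,
    ← integral_add_right_eq_self ((Ioi (c + d)).indicator f) d]
  congr 1
  ext x
  simp [indicator_apply]

lemma heatK_one_eq_gaussianPDFReal : heatK 1 = gaussianPDFReal 0 1 := by
  ext z
  simp [heatK, gaussianPDFReal]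

lemma Phi_eq_cdf (ξ : ℝ) : Phi ξ = cdf (gaussianReal 0 1) ξ := by
  rw [cdf_eq_real, measureReal_def, gaussianReal_apply_eq_integral _ one_ne_zero,
    ENNReal.toReal_ofReal (integral_nonneg fun _ => gaussianPDFReal_nonneg _ _ _),
    Phi, heatK_one_eq_gaussianPDFReal]

lemma heatK_one_pos (z : ℝ) : 0 < heatK 1 z :=
  heatK_one_eq_gaussianPDFReal ▸ gaussianPDFReal_pos 0 1 z one_ne_zero

lemma integrable_heatK_one : Integrable (heatK 1) :=
  heatK_one_eq_gaussianPDFReal ▸ integrable_gaussianPDFReal 0 1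

lemma heatK_one_le_of_abs_le {z w : ℝ} (h : |z| ≤ |w|) : heatK 1 w ≤ heatK 1 z := by
  have : z ^ 2 ≤ w ^ 2 := sq_le_sq.mpr h
  simp only [heatK]
  gcongr

lemma heatK_one_add_one_le {z : ℝ} (hz : 0 ≤ z) :
    heatK 1 (z + 1) ≤ exp (-(1 / 2)) * heatK 1 z := by
  simp only [heatK, mul_left_comm (exp _), ← exp_add]
  gcongr
  nlinarith

lemma sqrt_mul_heatK_sqrt_mul {ε : ℝ} (hε : 0 < ε) (u : ℝ) :
    √ε * heatK ε (√ε * u) = heatK 1 u := by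
  have hs : 0 < √ε := sqrt_pos.mpr hε
  simp only [heatK, mul_one, sqrt_mul (by positivity : 0 ≤ 2 * π) ε, mul_pow, sq_sqrt hε.le]
  field_simp

lemma Phi_mono : Monotone Phi := by
  simpa only [← funext Phi_eq_cdf] using (cdf (gaussianReal 0 1)).mono

lemma Phi_nonneg (ξ : ℝ) : 0 ≤ Phi ξ := Phi_eq_cdf ξ ▸ cdf_nonneg _ ξ

lemma one_sub_Phi_eq_integral_Ioi (ξ : ℝ) : 1 - Phi ξ = ∫ z in Ioi ξ, heatK 1 z := by
  rw [eq_comm, eq_sub_iff_add_eq', Phi, intervalIntegral.integral_Iic_add_Ioi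
    integrable_heatK_one.integrableOn integrable_heatK_one.integrableOn,
    heatK_one_eq_gaussianPDFReal, integral_gaussianPDFReal_eq_one 0 one_ne_zero]

lemma one_sub_Phi_nonneg (ξ : ℝ) : 0 ≤ 1 - Phi ξ :=
  Phi_eq_cdf ξ ▸ sub_nonneg.mpr (cdf_le_one _ ξ)

lemma Phi_neg (ξ : ℝ) : Phi (-ξ) = 1 - Phi ξ := by
  calc Phi (-ξ) = ∫ z in Iic (-ξ), heatK 1 (-z) := by simp only [Phi, heatK, neg_sq]
    _ = 1 - Phi ξ := by rw [integral_comp_neg_Iic, neg_neg, one_sub_Phi_eq_integral_Ioi]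

lemma Phi_sub_Phi_eq_integral_Ioc {ξ η : ℝ} (h : ξ ≤ η) :
    Phi η - Phi ξ = ∫ z in Ioc ξ η, heatK 1 z := by
  rw [Phi, Phi, intervalIntegral.integral_Iic_sub_Iic integrable_heatK_one.integrableOn
    integrable_heatK_one.integrableOn, intervalIntegral.integral_of_le h]

lemma mul_one_sub_Phi_le_of_nonneg {ξ : ℝ} (hξ : 0 ≤ ξ) :
    (1 - exp (-(1 / 2))) * (1 - Phi ξ) ≤ Phi (ξ + 1) - Phi ξ := by
  have hdecay : ∫ z in Ioi (ξ + 1), heatK 1 z ≤ exp (-(1 / 2)) * ∫ z in Ioi ξ, heatK 1 z := by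
    rw [← setIntegral_Ioi_comp_add_right, ← integral_const_mul]
    exact setIntegral_mono_on (integrable_heatK_one.comp_add_right 1).integrableOn
      (integrable_heatK_one.const_mul _).integrableOn measurableSet_Ioi
      fun z hz => heatK_one_add_one_le (hξ.trans (le_of_lt hz))
  rw [← one_sub_Phi_eq_integral_Ioi, ← one_sub_Phi_eq_integral_Ioi] at hdecay
  linarith

lemma mul_one_sub_Phi_le_of_mem_Icc {b ξ : ℝ} (hξ : ξ ∈ Icc (-b) 0) :
    heatK 1 (b + 1) * (1 - Phi ξ) ≤ Phi (ξ + 1) - Phi ξ := by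
  have hlower : ∀ z ∈ Ioc ξ (ξ + 1), heatK 1 (b + 1) ≤ heatK 1 z := fun z hz =>
    heatK_one_le_of_abs_le <| by
      rw [abs_of_nonneg (by linarith [hξ.1, hξ.2] : 0 ≤ b + 1), abs_le]
      constructor <;> linarith [hξ.1, hξ.2, hz.1, hz.2]
  calc heatK 1 (b + 1) * (1 - Phi ξ) ≤ heatK 1 (b + 1) * volume.real (Ioc ξ (ξ + 1)) := by
        gcongr
        · exact (heatK_one_pos _).le
        · simp [Phi_nonneg ξ]
    _ ≤ ∫ z in Ioc ξ (ξ + 1), heatK 1 z :=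
        setIntegral_ge_of_const_le_real measurableSet_Ioc (by simp) hlower
          integrable_heatK_one.integrableOn
    _ = Phi (ξ + 1) - Phi ξ := (Phi_sub_Phi_eq_integral_Ioc (by linarith)).symm

lemma exists_mul_one_sub_Phi_le (b : ℝ) :
    ∃ c > 0, ∀ ξ, -b ≤ ξ → c * (1 - Phi ξ) ≤ Phi (ξ + 1) - Phi ξ := by
  refine ⟨min (1 - exp (-(1 / 2))) (heatK 1 (b + 1)),
    lt_min (sub_pos.mpr (exp_lt_one_iff.mpr (by norm_num))) (heatK_one_pos _), fun ξ hξ => ?_⟩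
  rcases le_total 0 ξ with h | h
  · exact (mul_le_mul_of_nonneg_right (min_le_left _ _) (one_sub_Phi_nonneg ξ)).trans
      (mul_one_sub_Phi_le_of_nonneg h)
  · exact (mul_le_mul_of_nonneg_right (min_le_right _ _) (one_sub_Phi_nonneg ξ)).trans
      (mul_one_sub_Phi_le_of_mem_Icc ⟨hξ, h⟩)

lemma exists_abs_Phi_sub_indicator_le (b : ℝ) :
    ∃ C > 0, ∀ η ∈ Icc (-b) b, ∀ ξ,
      |Phi ξ - (Ici η).indicator (fun _ => (1 : ℝ)) ξ| ≤ C * (Phi (ξ + 1) - Phi (ξ - 1)) := by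
  obtain ⟨c, hc, hbound⟩ := exists_mul_one_sub_Phi_le b
  refine ⟨c⁻¹, inv_pos.mpr hc, fun η hη ξ => ?_⟩
  have hmono : Phi (ξ - 1) ≤ Phi ξ ∧ Phi ξ ≤ Phi (ξ + 1) :=
    ⟨Phi_mono (by linarith), Phi_mono (by linarith)⟩
  by_cases h : η ≤ ξ
  · have hright := hbound ξ (by linarith [hη.1])
    rw [indicator_of_mem (mem_Ici.mpr h), abs_of_nonpos (by linarith [one_sub_Phi_nonneg ξ]),
      le_inv_mul_iff₀ hc]
    linarith
  · -- `Phi (-ξ) = 1 - Phi ξ` turns the bound on the right into one on the left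
    have hleft := hbound (-ξ) (by linarith [hη.2])
    rw [Phi_neg, show -ξ + 1 = -(ξ - 1) by ring, Phi_neg] at hleft
    rw [indicator_of_notMem (by simpa using h), sub_zero, abs_of_nonneg (Phi_nonneg ξ),
      le_inv_mul_iff₀ hc]
    linarith

lemma image_exp_affine_Iic {k : ℝ} (hk : 0 < k) (m c : ℝ) :
    (fun u => exp (k * u + m)) '' Iic c = Ioc 0 (exp (k * c + m)) := by
  ext z
  constructor
  · rintro ⟨u, hu, rfl⟩
    exact ⟨exp_pos _, exp_le_exp.mpr (by gcongr; exact hu)⟩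
  · rintro ⟨hz, hzc⟩
    refine ⟨(log z - m) / k, ?_, by simp [mul_div_cancel₀ _ hk.ne', exp_log hz]⟩
    rw [mem_Iic, div_le_iff₀ hk]
    linarith [(log_le_log hz hzc).trans_eq (log_exp _)]

lemma setIntegral_Ioc_zero_exp_affine {E : Type*} [NormedAddCommGroup E] [NormedSpace ℝ E]
    {k : ℝ} (hk : 0 < k) (m c : ℝ) (g : ℝ → E) :
    ∫ z in Ioc 0 (exp (k * c + m)), g z
      = ∫ u in Iic c, (k * exp (k * u + m)) • g (exp (k * u + m)) := by
  have hderiv : ∀ u ∈ Iic c, HasDerivWithinAt (fun u => exp (k * u + m))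
      (k * exp (k * u + m)) (Iic c) u := fun u _ => by
    simpa [mul_comm] using (((hasDerivAt_id u).const_mul k).add_const m).exp.hasDerivWithinAt
  have hinj : InjOn (fun u => exp (k * u + m)) (Iic c) := fun u _ v _ huv => by
    simpa [hk.ne'] using huv
  rw [← image_exp_affine_Iic hk, integral_image_eq_integral_abs_deriv_smul measurableSet_Iic
    hderiv hinj]
  refine setIntegral_congr_fun measurableSet_Iic fun u _ => ?_
  rw [abs_of_pos (by positivity)]

lemma theta_mul_exp {a x : ℝ} (hx : 0 < x) (c y t : ℝ) :
    theta a (x * exp c) y t = theta a x y t + c / a := by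
  rw [theta, theta, log_mul hx.ne' (exp_ne_zero c), log_exp, add_div]
  ring

lemma Psi_eq_Phi {a x y ε : ℝ} (ha : 0 < a) (hx : 0 < x) (hε : 0 < ε) :
    Psi a x ε y = Phi (theta a x y ε / √ε) := by
  have hs : 0 < √ε := sqrt_pos.mpr hε
  have hlog : a * √ε * (theta a x y ε / √ε) + (log y + a ^ 2 * ε / 2) = log x := by
    rw [theta]
    field_simp
    ring
  calc Psi a x ε y
      = ∫ z in Ioc 0 (exp (a * √ε * (theta a x y ε / √ε) + (log y + a ^ 2 * ε / 2))),
          qhat a ε z y := by rw [hlog, exp_log hx, Psi]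
    _ = Phi (theta a x y ε / √ε) := by
      rw [setIntegral_Ioc_zero_exp_affine (by positivity), Phi]
      refine setIntegral_congr_fun measurableSet_Iic fun u _ => ?_
      have harg : log (exp (a * √ε * u + (log y + a ^ 2 * ε / 2))) / a - log y / a - a * ε / 2
          = √ε * u := by
        rw [log_exp]
        field_simp
        ring
      rw [smul_eq_mul, qhat, harg, ← sqrt_mul_heatK_sqrt_mul hε u]
      field_simp

lemma neg_le_theta_div_sqrt_iff {a x y ε : ℝ} (ha : 0 < a) (hx : 0 < x) (hy : 0 < y)
    (hε : 0 < ε) : -(a * √ε / 2) ≤ theta a x y ε / √ε ↔ y ≤ x := by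
  have hs : 0 < √ε := sqrt_pos.mpr hε
  have hθ : theta a x y ε / √ε + a * √ε / 2 = (log x - log y) / (a * √ε) := by
    rw [theta]
    field_simp
    rw [sq_sqrt hε.le]
    ring
  rw [← sub_nonneg, sub_neg_eq_add, hθ, le_div_iff₀ (by positivity), zero_mul, sub_nonneg,
    log_le_log_iff hy hx]

theorem indicator_mollification_bound (a : ℝ) (ha : 0 < a) :
    ∃ C₀ : ℝ, 0 < C₀ ∧ ∀ x ∈ Set.Ioi (0:ℝ), ∀ y ∈ Set.Ioi (0:ℝ), ∀ ε ∈ Set.Ioo (0:ℝ) 1,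
      |Psi a x ε y - Set.indicator (Set.Ioc (0:ℝ) x) (fun _ => (1:ℝ)) y|
        ≤ C₀ * (Psi a (x * Real.exp (a * Real.sqrt ε)) ε y
            - Psi a (x * Real.exp (-(a * Real.sqrt ε))) ε y) := by
  obtain ⟨C, hC, hbound⟩ := exists_abs_Phi_sub_indicator_le (a / 2)
  refine ⟨C, hC, fun x (hx : 0 < x) y (hy : 0 < y) ε ⟨hε, hε1⟩ => ?_⟩
  have hs : 0 < √ε := sqrt_pos.mpr hε
  have hη : -(a * √ε / 2) ∈ Icc (-(a / 2)) (a / 2) := by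
    have := sqrt_le_one.mpr hε1.le
    constructor <;> nlinarith
  have hplus : theta a (x * exp (a * √ε)) y ε / √ε = theta a x y ε / √ε + 1 := by
    rw [theta_mul_exp hx]
    field_simp
  have hminus : theta a (x * exp (-(a * √ε))) y ε / √ε = theta a x y ε / √ε - 1 := by
    rw [theta_mul_exp hx]
    field_simp
    ring
  have hind : (Ioc 0 x).indicator (fun _ => (1 : ℝ)) y
      = (Ici (-(a * √ε / 2))).indicator (fun _ => 1) (theta a x y ε / √ε) := by
    simp only [indicator_apply, mem_Ioc, mem_Ici, neg_le_theta_div_sqrt_iff ha hx hy hε, hy,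
      true_and]
  rw [Psi_eq_Phi ha hx hε, Psi_eq_Phi ha (by positivity) hε, Psi_eq_Phi ha (by positivity) hε,
    hplus, hminus, hind]
  exact hbound _ hη _
end

section
/- For every x ∈ (0,∞) and all σ, σ' ∈ (0,∞): a² ∫_0^∞ y² q_σ(y,x) q_{σ'}(y,x) dy = ( a x / √(2π) ) · e^{-a²(σ+σ')/8} · (σ + σ')^{-1/2}. -/
/-!
Substituting `y = x e^{a u}` turns `a² y² q_σ(y,x) q_σ'(y,x) dy` into
`a x e^{a u} p_σ(u + aσ/2) p_σ'(u + aσ'/2) du`. Completing the square,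
`e^{a u/2} p_t(u + a t/2) = e^{-a² t/8} p_t(u)`, and what remains is the Chapman–Kolmogorov
identity `∫ p_σ p_σ' = p_{σ+σ'}(0) = (2π(σ+σ'))^{-1/2}`.
-/

open MeasureTheory Real Set

theorem integral_Ioi_zero_eq_integral_mul_exp {E : Type*} [NormedAddCommGroup E] [NormedSpace ℝ E]
    (g : ℝ → E) {a c : ℝ} (ha : a ≠ 0) (hc : 0 < c) :
    ∫ y in Ioi 0, g y = ∫ u, (|a| * c * exp (a * u)) • g (c * exp (a * u)) := by
  have himage : (fun u ↦ c * exp (a * u)) '' univ = Ioi 0 := by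
    ext y
    simp only [image_univ, mem_range, mem_Ioi]
    refine ⟨fun ⟨u, hu⟩ ↦ hu ▸ by positivity, fun hy ↦ ⟨(log y - log c) / a, ?_⟩⟩
    rw [mul_div_cancel₀ _ ha, exp_sub, exp_log hy, exp_log hc]
    field_simp
  have hderiv : ∀ u ∈ univ,
      HasDerivWithinAt (fun u ↦ c * exp (a * u)) (c * (exp (a * u) * a)) univ u := fun u _ ↦
    (((hasDerivAt_id u).const_mul a).exp.const_mul c).hasDerivWithinAt.congr_deriv (by simp)
  have hinj : InjOn (fun u ↦ c * exp (a * u)) univ := fun u _ v _ h ↦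
    mul_left_cancel₀ ha (exp_injective (mul_left_cancel₀ hc.ne' h))
  rw [← himage, integral_image_eq_integral_abs_deriv_smul MeasurableSet.univ hderiv hinj,
    setIntegral_univ]
  congr 1 with u
  rw [abs_mul, abs_mul, abs_of_pos hc, abs_of_pos (exp_pos _)]
  congr 1
  ring

theorem qker_mul_exp_self {a x : ℝ} (ha : a ≠ 0) (hx : x ≠ 0) (t u : ℝ) :
    qker a t (x * exp (a * u)) x = (a * x * exp (a * u))⁻¹ * heatK t (u + a * t / 2) := by
  have hlog : log (x * exp (a * u)) = log x + a * u := by rw [log_mul hx (exp_pos _).ne', log_exp]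
  rw [qker, hlog, ← mul_assoc]
  congr 2
  field_simp
  ring

theorem heatK_add_mul_exp {t : ℝ} (ht : t ≠ 0) (a u : ℝ) :
    heatK t (u + a * t / 2) * exp (a * u / 2) = exp (-a ^ 2 * t / 8) * heatK t u := by
  rw [heatK, heatK, mul_assoc, ← exp_add, mul_left_comm, ← exp_add]
  congr 2
  field_simp
  ring

theorem heatK_zero_right (t : ℝ) : heatK t 0 = (√(2 * π * t))⁻¹ := by
  rw [heatK, zero_pow two_ne_zero, neg_zero, zero_div, exp_zero, mul_one]

theorem integral_heatK_mul_heatK {s t : ℝ} (hs : 0 < s) (ht : 0 < t) :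
    ∫ u, heatK s u * heatK t u = heatK (s + t) 0 := by
  have hprod : ∀ u, heatK s u * heatK t u
      = ((√(2 * π * s))⁻¹ * (√(2 * π * t))⁻¹) * exp (-((s + t) / (2 * s * t)) * u ^ 2) := by
    intro u
    rw [heatK, heatK, mul_mul_mul_comm, ← exp_add]
    congr 2
    field_simp
    ring
  simp_rw [hprod]
  rw [integral_const_mul, integral_gaussian, heatK_zero_right]
  have hquot : π / ((s + t) / (2 * s * t)) = 2 * π * s * (2 * π * t) / (2 * π * (s + t)) := by
    field_simp
  have hs' : 0 < √(2 * π * s) := by positivity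
  have ht' : 0 < √(2 * π * t) := by positivity
  rw [hquot, sqrt_div' _ (by positivity), sqrt_mul (by positivity : (0:ℝ) ≤ 2 * π * s)]
  field_simp

theorem qker_quadratic_covariation_density (a : ℝ) (ha : 0 < a) (x : ℝ) (hx : 0 < x)
    (σ σ' : ℝ) (hσ : 0 < σ) (hσ' : 0 < σ') :
    a ^ 2 * (∫ y in Set.Ioi (0:ℝ), y ^ 2 * qker a σ y x * qker a σ' y x)
      = (a * x / Real.sqrt (2 * Real.pi)) * Real.exp (-a ^ 2 * (σ + σ') / 8)
          * (σ + σ') ^ (-(1:ℝ) / 2) := by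
  have hintegrand : ∀ u, a ^ 2 * ((|a| * x * exp (a * u)) • ((x * exp (a * u)) ^ 2
      * qker a σ (x * exp (a * u)) x * qker a σ' (x * exp (a * u)) x))
      = a * x * exp (-a ^ 2 * (σ + σ') / 8) * (heatK σ u * heatK σ' u) := by
    intro u
    have hexp : exp (a * u) = exp (a * u / 2) * exp (a * u / 2) := by rw [← exp_add, add_halves]
    rw [abs_of_pos ha, qker_mul_exp_self ha.ne' hx.ne', qker_mul_exp_self ha.ne' hx.ne',
      smul_eq_mul]
    calc _ = a * x * ((heatK σ (u + a * σ / 2) * exp (a * u / 2))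
          * (heatK σ' (u + a * σ' / 2) * exp (a * u / 2))) := by
          field_simp
          rw [hexp]
          ring
      _ = _ := by
          rw [heatK_add_mul_exp hσ.ne', heatK_add_mul_exp hσ'.ne',
            show -a ^ 2 * (σ + σ') / 8 = -a ^ 2 * σ / 8 + -a ^ 2 * σ' / 8 by ring, exp_add]
          ring
  rw [integral_Ioi_zero_eq_integral_mul_exp _ ha.ne' hx, ← integral_const_mul]
  simp_rw [hintegrand]
  have hrpow : (σ + σ') ^ (-(1 : ℝ) / 2) = (√(σ + σ'))⁻¹ := by
    rw [neg_div, rpow_neg (by positivity), sqrt_eq_rpow]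
  rw [integral_const_mul, integral_heatK_mul_heatK hσ hσ', heatK_zero_right, hrpow,
    sqrt_mul (by positivity) (σ + σ')]
  field_simp
end
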